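/- Let G be the context-free grammar over the terminal alphabet {•, (, )} with nonterminals S and R, start symbol S, and production rules S → • | S• | (R) | S(R) and R → (•) | (R) | (S(R)) | (S•). Then: (1) the language generated from start symbol S is exactly the set of dot-bracket words of nonempty canonical secondary structures (with θ = 1); and (2) the language generated from start symbol R is exactly the set of dot-bracket words of nonempty secondary structures T (with θ = 1) such that the structure obtained from T by adding one enclosing base pair (i.e., shifting all positions of T up by one and adding the pair (1, |T| + 2)) is canonical. -/

import Mathlib

/-- The alphabet `{•, (, )}` of dot-bracket words. -/
inductive DB : Type
  | dot : DB
  | lpar : DB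
  | rpar : DB
deriving DecidableEq

/-- A secondary structure on `[1,n]` with `θ = 1`: a finite set of base pairs `(i,j)`
with `1 ≤ i`, `i + 1 < j` (i.e. `i < j` and `j - i > 1`), `j ≤ n`, no shared endpoints,
and no crossings (pseudoknots). -/
def IsSecStr (n : ℕ) (S : Finset (ℕ × ℕ)) : Prop :=
  (∀ p ∈ S, 1 ≤ p.1 ∧ p.1 + 1 < p.2 ∧ p.2 ≤ n) ∧
  (∀ p ∈ S, ∀ q ∈ S, p ≠ q →
    p.1 ≠ q.1 ∧ p.1 ≠ q.2 ∧ p.2 ≠ q.1 ∧ p.2 ≠ q.2) ∧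
  (∀ p ∈ S, ∀ q ∈ S, ¬ (p.1 < q.1 ∧ q.1 < p.2 ∧ p.2 < q.2))

/-- A secondary structure is canonical if it has no lonely base pairs. -/
def IsCanonical (S : Finset (ℕ × ℕ)) : Prop :=
  ∀ p ∈ S, (p.1 - 1, p.2 + 1) ∈ S ∨ (p.1 + 1, p.2 - 1) ∈ S

/-- The dot-bracket word of a secondary structure on `[1,n]`: position `k` (1-based)
gets `(` if it is the left end of a base pair, `)` if it is the right end,
and `•` otherwise. -/
def dotBracket (n : ℕ) (S : Finset (ℕ × ℕ)) : List DB :=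
  (List.range n).map fun k =>
    if ∃ p ∈ S, p.1 = k + 1 then DB.lpar
    else if ∃ p ∈ S, p.2 = k + 1 then DB.rpar
    else DB.dot

/-- The structure obtained from `S` (a structure on `[1,n]`) by adding one enclosing
base pair: shift all positions up by one and add the pair `(1, n + 2)`. -/
def enclose (n : ℕ) (S : Finset (ℕ × ℕ)) : Finset (ℕ × ℕ) :=
  insert (1, n + 2) (S.image fun p => (p.1 + 1, p.2 + 1))

mutual
  /-- Words derivable from the nonterminal `S` of the grammar
  `S → • | S• | (R) | S(R)`, `R → (•) | (R) | (S(R)) | (S•)`. -/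
  inductive GenS : List DB → Prop
    | dot : GenS [DB.dot]
    | app_dot (w : List DB) : GenS w → GenS (w ++ [DB.dot])
    | wrap (w : List DB) : GenR w → GenS (DB.lpar :: w ++ [DB.rpar])
    | app_wrap (v w : List DB) : GenS v → GenR w →
        GenS (v ++ DB.lpar :: w ++ [DB.rpar])
  /-- Words derivable from the nonterminal `R` of the same grammar. -/
  inductive GenR : List DB → Prop
    | pdot : GenR [DB.lpar, DB.dot, DB.rpar]
    | wrap (w : List DB) : GenR w → GenR (DB.lpar :: w ++ [DB.rpar])
    | swrap (v w : List DB) : GenS v → GenR w →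
        GenR (DB.lpar :: (v ++ DB.lpar :: w ++ [DB.rpar]) ++ [DB.rpar])
    | sdot (v : List DB) : GenS v → GenR (DB.lpar :: v ++ [DB.dot, DB.rpar])
end

/-!
Read a structure on `[1, n]` from its last position. Either `n` is unpaired, or it closes a pair
`(a + 1, n)`; then no pair straddles position `a`, so the structure is a structure on `[1, a]`
followed by the enclosure `(U)` of a structure `U`, and as a stacked pair never straddles the
split, it is canonical iff both parts are. This gives the rules `S → S• | S(R)`, and `S → • | (R)`
when nothing precedes. Enclosing `T` gives a canonical structure iff `T` has the outer pair
`(1, n)` and every other pair of `T` is stacked, i.e. `T = (U)` with `U` canonical except possibly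
at its own outer pair; the rules for `R` read off `U` in the same way.
-/

def shift (m : ℕ) (S : Finset (ℕ × ℕ)) : Finset (ℕ × ℕ) :=
  S.image fun p => (p.1 + m, p.2 + m)

lemma mem_shift {m : ℕ} {S : Finset (ℕ × ℕ)} {p : ℕ × ℕ} :
    p ∈ shift m S ↔ m ≤ p.1 ∧ m ≤ p.2 ∧ (p.1 - m, p.2 - m) ∈ S := by
  constructor
  · simp only [shift, Finset.mem_image]
    rintro ⟨q, hq, rfl⟩
    simpa using hq
  · rintro ⟨h₁, h₂, h⟩
    exact Finset.mem_image.2 ⟨_, h, by ext <;> simp <;> omega⟩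

lemma exists_eq_shift {m : ℕ} {X : Finset (ℕ × ℕ)} (hX : ∀ p ∈ X, m < p.1 ∧ m < p.2) :
    ∃ B, X = shift m B ∧ ∀ p ∈ B, 1 ≤ p.1 := by
  refine ⟨X.image fun p => (p.1 - m, p.2 - m), ?_, ?_⟩
  · ext p
    simp only [mem_shift, Finset.mem_image, Prod.ext_iff]
    constructor
    · intro hp
      have := hX p hp
      exact ⟨by omega, by omega, p, hp, rfl, rfl⟩
    · rintro ⟨-, -, q, hq, h₁, h₂⟩
      have := hX q hq
      rwa [show p = q by ext <;> omega]
  · simp only [Finset.forall_mem_image]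
    intro p hp
    have := hX p hp
    omega

lemma enclose_eq_insert_shift (n : ℕ) (T : Finset (ℕ × ℕ)) :
    enclose n T = insert (1, n + 2) (shift 1 T) := rfl

lemma isSecStr_shift_iff {m k : ℕ} {B : Finset (ℕ × ℕ)} (hB : ∀ p ∈ B, 1 ≤ p.1) :
    IsSecStr (m + k) (shift m B) ↔ IsSecStr k B := by
  have hinj : ∀ p q : ℕ × ℕ, (p.1 + m, p.2 + m) ≠ (q.1 + m, q.2 + m) ↔ p ≠ q := by
    simp [Prod.ext_iff]
  simp only [IsSecStr, shift, Finset.forall_mem_image, hinj]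
  constructor
  · rintro ⟨h₁, h₂, h₃⟩
    refine ⟨fun p hp => ?_, fun p hp q hq hpq => ?_, fun p hp q hq => ?_⟩
    · have := h₁ hp; have := hB p hp; omega
    · have := h₂ hp hq hpq; omega
    · have := h₃ hp hq; omega
  · rintro ⟨h₁, h₂, h₃⟩
    refine ⟨fun p hp => ?_, fun p hp q hq hpq => ?_, fun p hp q hq => ?_⟩
    · have := h₁ p hp; omega
    · have := h₂ p hp q hq hpq; omega
    · have := h₃ p hp q hq; omega

namespace IsSecStr

variable {n m k a : ℕ} {S T A B : Finset (ℕ × ℕ)}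

lemma mono (hS : IsSecStr n S) (h : n ≤ m) : IsSecStr m S :=
  ⟨fun p hp => by have := hS.1 p hp; omega, hS.2.1, hS.2.2⟩

lemma subset (hS : IsSecStr n S) (hT : T ⊆ S) (hm : ∀ p ∈ T, p.2 ≤ m) : IsSecStr m T :=
  ⟨fun p hp => ⟨(hS.1 p (hT hp)).1, (hS.1 p (hT hp)).2.1, hm p hp⟩,
    fun p hp q hq => hS.2.1 p (hT hp) q (hT hq),
    fun p hp q hq => hS.2.2 p (hT hp) q (hT hq)⟩

lemma endpoints_ne (hS : IsSecStr n S) {p q : ℕ × ℕ} (hp : p ∈ S) (hq : q ∈ S) (hpq : p ≠ q) :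
    p.1 ≠ q.1 ∧ p.1 ≠ q.2 ∧ p.2 ≠ q.1 ∧ p.2 ≠ q.2 :=
  hS.2.1 p hp q hq hpq

lemma union (hA : IsSecStr n A) (hB : IsSecStr n B) (hAB : ∀ p ∈ A, ∀ q ∈ B, p.2 < q.1) :
    IsSecStr n (A ∪ B) := by
  obtain ⟨hA₁, hA₂, hA₃⟩ := hA
  obtain ⟨hB₁, hB₂, hB₃⟩ := hB
  simp only [IsSecStr, Finset.forall_mem_union]
  refine ⟨⟨hA₁, hB₁⟩,
    ⟨fun p hp => ⟨hA₂ p hp, fun q hq _ => ?_⟩, fun p hp => ⟨fun q hq _ => ?_, hB₂ p hp⟩⟩,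
    ⟨fun p hp => ⟨hA₃ p hp, fun q hq => ?_⟩, fun p hp => ⟨fun q hq => ?_, hB₃ p hp⟩⟩⟩
  all_goals grind

lemma insert {a b : ℕ} (hS : IsSecStr n S) (hab : 1 ≤ a ∧ a + 1 < b ∧ b ≤ n)
    (hinside : ∀ p ∈ S, a < p.1 ∧ p.2 < b) : IsSecStr n (insert (a, b) S) := by
  obtain ⟨h₁, h₂, h₃⟩ := hS
  simp only [IsSecStr, Finset.forall_mem_insert]
  refine ⟨⟨hab, h₁⟩, ⟨⟨by simp, fun q hq _ => ?_⟩, fun p hp => ⟨fun _ => ?_, h₂ p hp⟩⟩,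
    ⟨⟨by simp, fun q hq => ?_⟩, fun p hp => ⟨?_, h₃ p hp⟩⟩⟩
  all_goals grind

lemma union_shift (hA : IsSecStr m A) (hB : IsSecStr k B) :
    IsSecStr (m + k) (A ∪ shift m B) := by
  refine (hA.mono (Nat.le_add_right m k)).union
    ((isSecStr_shift_iff fun p hp => (hB.1 p hp).1).2 hB) fun p hp q hq => ?_
  have := hA.1 p hp
  have := (mem_shift.1 hq).1
  have := (hB.1 _ (mem_shift.1 hq).2.2).1
  omega

lemma enclose (hT : IsSecStr n T) (hn : 1 ≤ n) : IsSecStr (n + 2) (enclose n T) := by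
  have hshift : IsSecStr (1 + n) (shift 1 T) := (isSecStr_shift_iff fun p hp => (hT.1 p hp).1).2 hT
  refine (hshift.mono (by omega)).insert (by omega) fun p hp => ?_
  obtain ⟨-, -, hp'⟩ := mem_shift.1 hp
  have := hT.1 _ hp'
  have := hshift.1 p hp
  omega

lemma exists_eq_union_shift (hS : IsSecStr (a + k) S) (hsplit : ∀ p ∈ S, p.2 ≤ a ∨ a < p.1) :
    ∃ A B, IsSecStr a A ∧ IsSecStr k B ∧ S = A ∪ shift a B := by
  obtain ⟨B, hB, hB₁⟩ := exists_eq_shift (m := a) (X := S.filter fun p => a < p.1)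
    fun p hp => by
      have := Finset.mem_filter.1 hp
      have := hS.1 p this.1
      omega
  refine ⟨S.filter fun p => p.2 ≤ a, B,
    hS.subset (Finset.filter_subset _ _) fun p hp => (Finset.mem_filter.1 hp).2,
    (isSecStr_shift_iff hB₁).1 (hB ▸ hS.subset (Finset.filter_subset _ _)
      fun p hp => (hS.1 p (Finset.mem_filter.1 hp).1).2.2), ?_⟩
  rw [← hB, Finset.filter_union_right]
  ext p
  simp only [Finset.mem_filter, iff_self_and]
  exact hsplit p

lemma exists_eq_enclose (hT : IsSecStr (k + 2) T) (h : (1, k + 2) ∈ T) :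
    ∃ U, IsSecStr k U ∧ T = _root_.enclose k U := by
  have hinner : ∀ p ∈ T.erase (1, k + 2), 1 < p.1 ∧ p.1 < p.2 ∧ p.2 < k + 2 := fun p hp => by
    obtain ⟨hne, hp⟩ := Finset.mem_erase.1 hp
    have := hT.1 p hp
    have := hT.endpoints_ne hp h hne
    omega
  obtain ⟨U, hU, hU₁⟩ := exists_eq_shift (m := 1) (X := T.erase (1, k + 2))
    fun p hp => by have := hinner p hp; omega
  refine ⟨U, (isSecStr_shift_iff hU₁).1 (hU ▸ hT.subset (Finset.erase_subset _ _)
    fun p hp => by have := hinner p hp; omega), ?_⟩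
  rw [enclose_eq_insert_shift, ← hU, Finset.insert_erase h]

lemma exists_eq_union_shift_enclose (hS : IsSecStr n S) (h : (a + 1, n) ∈ S) :
    ∃ k A U, n = a + (k + 2) ∧ 1 ≤ k ∧ IsSecStr a A ∧ IsSecStr k U ∧
      S = A ∪ shift a (_root_.enclose k U) := by
  have hn := hS.1 _ h
  obtain ⟨k, rfl⟩ : ∃ k, n = a + (k + 2) := ⟨n - a - 2, by omega⟩
  have hsplit : ∀ p ∈ S, p.2 ≤ a ∨ a < p.1 := fun p hp => by
    by_contra! hcross
    have hne : p ≠ (a + 1, a + (k + 2)) := by rintro rfl; omega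
    have := hS.1 p hp
    have := hS.endpoints_ne hp h hne
    have := hS.2.2 p hp _ h
    omega
  obtain ⟨A, B, hA, hB, rfl⟩ := hS.exists_eq_union_shift hsplit
  have h₁ : (1, k + 2) ∈ B := by
    rcases Finset.mem_union.1 h with hA' | hB'
    · have := hA.1 _ hA'
      omega
    · simpa using (mem_shift.1 hB').2.2
  obtain ⟨U, hU, rfl⟩ := hB.exists_eq_enclose h₁
  exact ⟨k, A, U, rfl, by omega, hA, hU, rfl⟩

lemma of_forall_snd_ne (hS : IsSecStr (n + 1) S) (h : ∀ p ∈ S, p.2 ≠ n + 1) : IsSecStr n S :=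
  hS.subset subset_rfl fun p hp => by have := hS.1 p hp; have := h p hp; omega

end IsSecStr

def dotBracketAt (S : Finset (ℕ × ℕ)) (k : ℕ) : DB :=
  if ∃ p ∈ S, p.1 = k then DB.lpar
  else if ∃ p ∈ S, p.2 = k then DB.rpar
  else DB.dot

lemma dotBracketAt_congr {S T : Finset (ℕ × ℕ)} {k l : ℕ}
    (h₁ : (∃ p ∈ S, p.1 = k) ↔ ∃ p ∈ T, p.1 = l)
    (h₂ : (∃ p ∈ S, p.2 = k) ↔ ∃ p ∈ T, p.2 = l) : dotBracketAt S k = dotBracketAt T l := by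
  simp only [dotBracketAt, h₁, h₂]

lemma dotBracket_add (m k : ℕ) (S : Finset (ℕ × ℕ)) :
    dotBracket (m + k) S =
      dotBracket m S ++ (List.range k).map fun i => dotBracketAt S (m + i + 1) := by
  simp only [dotBracket, List.range_add, List.map_append, List.map_map]
  rfl

section DotBracket

variable {n m k : ℕ} {S T A B : Finset (ℕ × ℕ)}

lemma dotBracket_succ (hS : IsSecStr n S) : dotBracket (n + 1) S = dotBracket n S ++ [DB.dot] := by
  have := hS.1
  simp only [dotBracket_add, List.range_one, List.map_cons, List.map_nil, dotBracketAt]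
  grind

lemma dotBracket_union_shift (hA : IsSecStr m A) (hB : IsSecStr k B) :
    dotBracket (m + k) (A ∪ shift m B) = dotBracket m A ++ dotBracket k B := by
  have := hA.1
  have := hB.1
  rw [dotBracket_add]
  congr 1 <;> refine List.map_congr_left fun i hi => dotBracketAt_congr ?_ ?_ <;>
    simp only [List.mem_range] at hi <;>
    simp only [shift, Finset.mem_union, or_and_right, exists_or, Finset.exists_mem_image] <;>
    grind

lemma dotBracket_enclose (hT : IsSecStr n T) :
    dotBracket (n + 2) (enclose n T) = DB.lpar :: dotBracket n T ++ [DB.rpar] := by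
  have := hT.1
  have hfirst : dotBracket 1 (enclose n T) = [DB.lpar] := by
    simp [dotBracket, enclose]
  have hinner : (List.range n).map (fun i => dotBracketAt (enclose n T) (1 + i + 1)) =
      dotBracket n T :=
    List.map_congr_left fun i hi => by
      apply dotBracketAt_congr <;> simp only [List.mem_range] at hi <;>
        simp only [enclose, Finset.exists_mem_insert, Finset.exists_mem_image] <;> grind
  have hlast : dotBracketAt (enclose n T) (1 + n + 0 + 1) = DB.rpar := by
    simp only [dotBracketAt, enclose, Finset.exists_mem_insert, Finset.exists_mem_image]
    grind
  rw [show n + 2 = 1 + n + 1 by omega, dotBracket_add, dotBracket_add, hfirst, hinner]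
  simp [hlast]

end DotBracket

def AlmostCanonical (n : ℕ) (S : Finset (ℕ × ℕ)) : Prop :=
  ∀ p ∈ S, p = (1, n) ∨ (p.1 - 1, p.2 + 1) ∈ S ∨ (p.1 + 1, p.2 - 1) ∈ S

lemma IsCanonical.almostCanonical {n : ℕ} {S : Finset (ℕ × ℕ)} (h : IsCanonical S) :
    AlmostCanonical n S :=
  fun p hp => Or.inr (h p hp)

lemma AlmostCanonical.isCanonical {n : ℕ} {S : Finset (ℕ × ℕ)} (h : AlmostCanonical n S)
    (hn : (1, n) ∉ S) : IsCanonical S := fun p hp =>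
  (h p hp).resolve_left fun e => hn (e ▸ hp)

section Canonical

variable {n m k : ℕ} {S T A B : Finset (ℕ × ℕ)}

lemma isCanonical_union_shift_iff (hA : IsSecStr m A) (hB : IsSecStr k B) :
    IsCanonical (A ∪ shift m B) ↔ IsCanonical A ∧ IsCanonical B := by
  have := hA.1
  have := hB.1
  constructor
  · intro h
    refine ⟨fun p hp => ?_, fun p hp => ?_⟩
    · have := h p (Finset.mem_union_left _ hp)
      simp only [Finset.mem_union, mem_shift] at this
      grind
    · have := h (p.1 + m, p.2 + m) (Finset.mem_union_right _ (by simp [mem_shift, hp]))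
      simp only [Finset.mem_union, mem_shift] at this
      grind
  · rintro ⟨hA', hB'⟩ p hp
    simp only [Finset.mem_union, mem_shift] at hp ⊢
    rcases hp with hp | ⟨-, -, hp⟩
    · have := hA' p hp
      grind
    · have := hB' _ hp
      grind

lemma isCanonical_enclose_iff (hT : IsSecStr n T) :
    IsCanonical (enclose n T) ↔ (1, n) ∈ T ∧ AlmostCanonical n T := by
  have := hT.1
  rw [enclose_eq_insert_shift]
  constructor
  · intro h
    refine ⟨?_, fun p hp => ?_⟩
    · have := h _ (Finset.mem_insert_self _ _)
      simp only [Finset.mem_insert, mem_shift] at this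
      grind
    · have := h (p.1 + 1, p.2 + 1) (Finset.mem_insert_of_mem (by simp [mem_shift, hp]))
      simp only [Finset.mem_insert, mem_shift] at this
      grind
  · rintro ⟨h₁, h₂⟩ p hp
    simp only [Finset.mem_insert, mem_shift] at hp ⊢
    rcases hp with rfl | ⟨-, -, hp⟩
    · grind
    · have := h₂ _ hp
      grind

lemma almostCanonical_enclose_iff (hT : IsSecStr n T) :
    AlmostCanonical (n + 2) (enclose n T) ↔ AlmostCanonical n T := by
  have := hT.1
  rw [enclose_eq_insert_shift]
  constructor
  · intro h p hp
    have := h (p.1 + 1, p.2 + 1) (Finset.mem_insert_of_mem (by simp [mem_shift, hp]))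
    simp only [Finset.mem_insert, mem_shift] at this
    grind
  · intro h p hp
    simp only [Finset.mem_insert, mem_shift] at hp ⊢
    rcases hp with rfl | ⟨-, -, hp⟩
    · grind
    · have := h _ hp
      grind

lemma isCanonical_enclose_enclose_iff (hT : IsSecStr n T) (hn : 1 ≤ n) :
    IsCanonical (enclose (n + 2) (enclose n T)) ↔ AlmostCanonical n T := by
  have hT₂ : IsSecStr (n + 2) (enclose n T) := hT.enclose hn
  rw [isCanonical_enclose_iff hT₂, almostCanonical_enclose_iff hT]
  exact and_iff_right (Finset.mem_insert_self _ _)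

end Canonical

def IsCanonicalWord (w : List DB) : Prop :=
  ∃ (n : ℕ) (S : Finset (ℕ × ℕ)), 1 ≤ n ∧ IsSecStr n S ∧ IsCanonical S ∧ w = dotBracket n S

def IsCanonicalInterior (w : List DB) : Prop :=
  ∃ (n : ℕ) (T : Finset (ℕ × ℕ)),
    1 ≤ n ∧ IsSecStr n T ∧ IsCanonical (enclose n T) ∧ w = dotBracket n T

lemma isCanonicalWord_dot : IsCanonicalWord [DB.dot] :=
  ⟨1, ∅, le_rfl, by simp [IsSecStr], by simp [IsCanonical], rfl⟩

lemma IsCanonicalWord.append_dot {w : List DB} (h : IsCanonicalWord w) :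
    IsCanonicalWord (w ++ [DB.dot]) := by
  obtain ⟨n, S, hn, hS, hc, rfl⟩ := h
  exact ⟨n + 1, S, by omega, hS.mono (by omega), hc, (dotBracket_succ hS).symm⟩

lemma IsCanonicalInterior.isCanonicalWord_wrap {w : List DB} (h : IsCanonicalInterior w) :
    IsCanonicalWord (DB.lpar :: w ++ [DB.rpar]) := by
  obtain ⟨n, T, hn, hT, hc, rfl⟩ := h
  exact ⟨n + 2, enclose n T, by omega, hT.enclose hn, hc, (dotBracket_enclose hT).symm⟩

lemma IsCanonicalWord.append_wrap {v w : List DB} (hv : IsCanonicalWord v)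
    (hw : IsCanonicalInterior w) : IsCanonicalWord (v ++ DB.lpar :: w ++ [DB.rpar]) := by
  obtain ⟨m, A, hm, hA, hcA, rfl⟩ := hv
  obtain ⟨k, T, hk, hT, hcT, rfl⟩ := hw
  refine ⟨m + (k + 2), A ∪ shift m (enclose k T), by omega, hA.union_shift (hT.enclose hk),
    (isCanonical_union_shift_iff hA (hT.enclose hk)).2 ⟨hcA, hcT⟩, ?_⟩
  rw [dotBracket_union_shift hA (hT.enclose hk), dotBracket_enclose hT, List.append_assoc]

lemma AlmostCanonical.isCanonicalInterior_wrap {k : ℕ} {U : Finset (ℕ × ℕ)}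
    (h : AlmostCanonical k U) (hU : IsSecStr k U) (hk : 1 ≤ k) :
    IsCanonicalInterior (DB.lpar :: dotBracket k U ++ [DB.rpar]) :=
  ⟨k + 2, enclose k U, by omega, hU.enclose hk, (isCanonical_enclose_enclose_iff hU hk).2 h,
    (dotBracket_enclose hU).symm⟩

lemma IsCanonicalWord.isCanonicalInterior_wrap {w : List DB} (h : IsCanonicalWord w) :
    IsCanonicalInterior (DB.lpar :: w ++ [DB.rpar]) := by
  obtain ⟨n, S, hn, hS, hc, rfl⟩ := h
  exact hc.almostCanonical.isCanonicalInterior_wrap hS hn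

lemma IsCanonicalInterior.wrap {w : List DB} (h : IsCanonicalInterior w) :
    IsCanonicalInterior (DB.lpar :: w ++ [DB.rpar]) := by
  obtain ⟨n, T, hn, hT, hc, rfl⟩ := h
  exact ((isCanonical_enclose_iff hT).1 hc).2.isCanonicalInterior_wrap hT hn

mutual

theorem GenS.isCanonicalWord {w : List DB} : GenS w → IsCanonicalWord w
  | .dot => isCanonicalWord_dot
  | .app_dot _ h => h.isCanonicalWord.append_dot
  | .wrap _ h => h.isCanonicalInterior.isCanonicalWord_wrap
  | .app_wrap _ _ hv hw => hv.isCanonicalWord.append_wrap hw.isCanonicalInterior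

theorem GenR.isCanonicalInterior {w : List DB} : GenR w → IsCanonicalInterior w
  | .pdot => isCanonicalWord_dot.isCanonicalInterior_wrap
  | .wrap _ h => h.isCanonicalInterior.wrap
  | .swrap _ _ hv hw =>
      (hv.isCanonicalWord.append_wrap hw.isCanonicalInterior).isCanonicalInterior_wrap
  | .sdot _ hv => by
      simpa using hv.isCanonicalWord.append_dot.isCanonicalInterior_wrap

end

lemma IsCanonical.exists_dotBracket_eq_of_mem {n a : ℕ} {S : Finset (ℕ × ℕ)} (hc : IsCanonical S)
    (hS : IsSecStr n S) (h : (a + 1, n) ∈ S) :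
    ∃ k A U, n = a + (k + 2) ∧ IsSecStr a A ∧ IsCanonical A ∧ IsSecStr k U ∧
      IsCanonical (enclose k U) ∧
      dotBracket n S = dotBracket a A ++ DB.lpar :: dotBracket k U ++ [DB.rpar] := by
  obtain ⟨k, A, U, rfl, hk, hA, hU, rfl⟩ := hS.exists_eq_union_shift_enclose h
  obtain ⟨hcA, hcU⟩ := (isCanonical_union_shift_iff hA (hU.enclose hk)).1 hc
  refine ⟨k, A, U, rfl, hA, hcA, hU, hcU, ?_⟩
  rw [dotBracket_union_shift hA (hU.enclose hk), dotBracket_enclose hU, List.append_assoc]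

lemma genS_dotBracket_of_isCanonical {n : ℕ}
    (ihS : ∀ m < n, ∀ S, 1 ≤ m → IsSecStr m S → IsCanonical S → GenS (dotBracket m S))
    (ihR : ∀ m < n, ∀ T, IsSecStr m T → IsCanonical (enclose m T) → GenR (dotBracket m T))
    {S : Finset (ℕ × ℕ)} (hn : 1 ≤ n) (hS : IsSecStr n S) (hc : IsCanonical S) :
    GenS (dotBracket n S) := by
  by_cases hlast : ∃ p ∈ S, p.2 = n
  · obtain ⟨⟨i, _⟩, hp, rfl⟩ := hlast
    obtain ⟨a, rfl⟩ : ∃ a, i = a + 1 := ⟨i - 1, by have := (hS.1 _ hp).1; omega⟩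
    obtain ⟨k, A, U, rfl, hA, hcA, hU, hcU, hword⟩ := hc.exists_dotBracket_eq_of_mem hS hp
    rw [hword]
    have hR := ihR k (by omega) U hU hcU
    rcases Nat.eq_zero_or_pos a with rfl | ha
    · -- `dotBracket 0 A` is `[]`
      exact GenS.wrap _ hR
    · exact GenS.app_wrap _ _ (ihS a (by omega) A ha hA hcA) hR
  · push Not at hlast
    obtain ⟨m, rfl⟩ : ∃ m, n = m + 1 := ⟨n - 1, by omega⟩
    have hS' := hS.of_forall_snd_ne hlast
    rw [dotBracket_succ hS']
    rcases Nat.eq_zero_or_pos m with rfl | hm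
    · exact GenS.dot
    · exact GenS.app_dot _ (ihS m (by omega) S hm hS' hc)

lemma genR_dotBracket_of_isCanonical_enclose {n : ℕ}
    (ihS : ∀ m < n, ∀ S, 1 ≤ m → IsSecStr m S → IsCanonical S → GenS (dotBracket m S))
    (ihR : ∀ m < n, ∀ T, IsSecStr m T → IsCanonical (enclose m T) → GenR (dotBracket m T))
    {T : Finset (ℕ × ℕ)} (hT : IsSecStr n T) (hc : IsCanonical (enclose n T)) :
    GenR (dotBracket n T) := by
  obtain ⟨h1n, -⟩ := (isCanonical_enclose_iff hT).1 hc
  have hn := (hT.1 _ h1n).2.1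
  obtain ⟨k, rfl⟩ : ∃ k, n = k + 2 := ⟨n - 2, by omega⟩
  obtain ⟨U, hU, rfl⟩ := hT.exists_eq_enclose h1n
  have hal := (isCanonical_enclose_enclose_iff hU (by omega)).1 hc
  rw [dotBracket_enclose hU]
  by_cases h1k : (1, k) ∈ U
  · exact GenR.wrap _ (ihR k (by omega) U hU ((isCanonical_enclose_iff hU).2 ⟨h1k, hal⟩))
  have hcU := hal.isCanonical h1k
  by_cases hlast : ∃ p ∈ U, p.2 = k
  · obtain ⟨⟨i, _⟩, hp, rfl⟩ := hlast
    obtain ⟨a, rfl⟩ : ∃ a, i = a + 1 := ⟨i - 1, by have := (hU.1 _ hp).1; omega⟩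
    have ha : 1 ≤ a := Nat.pos_of_ne_zero fun ha => h1k (ha ▸ hp)
    obtain ⟨j, A, V, rfl, hA, hcA, hV, hcV, hword⟩ := hcU.exists_dotBracket_eq_of_mem hU hp
    rw [hword]
    exact GenR.swrap _ _ (ihS a (by omega) A ha hA hcA) (ihR j (by omega) V hV hcV)
  · push Not at hlast
    obtain ⟨m, rfl⟩ : ∃ m, k = m + 1 := ⟨k - 1, by omega⟩
    have hU' := hU.of_forall_snd_ne hlast
    rw [dotBracket_succ hU']
    rcases Nat.eq_zero_or_pos m with rfl | hm
    · exact GenR.pdot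
    · simpa using GenR.sdot _ (ihS m (by omega) U hm hU' hcU)

theorem genS_and_genR_of_isSecStr (n : ℕ) :
    (∀ S, 1 ≤ n → IsSecStr n S → IsCanonical S → GenS (dotBracket n S)) ∧
    (∀ T, IsSecStr n T → IsCanonical (enclose n T) → GenR (dotBracket n T)) := by
  induction n using Nat.strong_induction_on with
  | _ n ih =>
    have ihS := fun m hm => (ih m hm).1
    have ihR := fun m hm => (ih m hm).2
    exact ⟨fun _ => genS_dotBracket_of_isCanonical ihS ihR,
      fun _ => genR_dotBracket_of_isCanonical_enclose ihS ihR⟩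

/-- (1) `L(S)` is exactly the set of dot-bracket words of nonempty canonical secondary
structures (θ = 1); (2) `L(R)` is exactly the set of dot-bracket words of nonempty
secondary structures `T` such that the structure obtained from `T` by adding one
enclosing base pair is canonical. -/
theorem grammar_generates_canonical :
    (∀ w : List DB, GenS w ↔ ∃ (n : ℕ) (S : Finset (ℕ × ℕ)),
        1 ≤ n ∧ IsSecStr n S ∧ IsCanonical S ∧ w = dotBracket n S) ∧
    (∀ w : List DB, GenR w ↔ ∃ (n : ℕ) (T : Finset (ℕ × ℕ)),
        1 ≤ n ∧ IsSecStr n T ∧ IsCanonical (enclose n T) ∧ w = dotBracket n T) :=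
  ⟨fun _ => ⟨GenS.isCanonicalWord, fun ⟨n, S, hn, hS, hc, hw⟩ =>
      hw ▸ (genS_and_genR_of_isSecStr n).1 S hn hS hc⟩,
    fun _ => ⟨GenR.isCanonicalInterior, fun ⟨n, T, _, hT, hc, hw⟩ =>
      hw ▸ (genS_and_genR_of_isSecStr n).2 T hT hc⟩⟩
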